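/- Let A be a finite set of candidates with |A| ≥ 3 and let N = {1,…,n} be a finite set of voters. If a social welfare function F mapping profiles of linear orders over A to weak orders over A satisfies Independence of Irrelevant Alternatives (IIA) and Non-Imposition (NI), then F is either null (all candidates socially indifferent at every profile), or F satisfies Weak Pareto, or F satisfies inverse Weak Pareto. -/

import Mathlib

/-- A voter preference: a strict linear (complete, transitive, antisymmetric) order on `A`. -/
abbrev Pref (A : Type*) := {r : A → A → Prop // IsStrictTotalOrder A r}

/-- A weak order: a complete, reflexive and transitive binary relation on `A`. -/
abbrev WeakOrd (A : Type*) := {r : A → A → Prop // Reflexive r ∧ Transitive r ∧ Total r}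

/-- The strict (asymmetric) part of a relation. -/
def StrictPart {A : Type*} (r : A → A → Prop) (a b : A) : Prop := r a b ∧ ¬ r b a

/-- Two relations agree on the pair `{a, b}`. -/
def AgreeOnPair {A : Type*} (r r' : A → A → Prop) (a b : A) : Prop :=
  (r a b ↔ r' a b) ∧ (r b a ↔ r' b a)

/-- Independence of Irrelevant Alternatives. -/
def IIA {A : Type*} {n : ℕ} (F : (Fin n → Pref A) → WeakOrd A) : Prop :=
  ∀ (P P' : Fin n → Pref A) (a b : A),
    (∀ i, AgreeOnPair (P i).1 (P' i).1 a b) → AgreeOnPair (F P).1 (F P').1 a b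

/-- Non-Imposition: every social ranking of a pair arises at some profile. -/
def NonImposition {A : Type*} {n : ℕ} (F : (Fin n → Pref A) → WeakOrd A) : Prop :=
  ∀ a b : A, ∃ P : Fin n → Pref A, (F P).1 a b

/-- Null rule: all candidates are socially indifferent at every profile. -/
def NullRule {A : Type*} {n : ℕ} (F : (Fin n → Pref A) → WeakOrd A) : Prop :=
  ∀ (P : Fin n → Pref A) (a b : A), (F P).1 a b ∧ (F P).1 b a

/-- Weak Pareto: unanimous strict preference for `a` over `b` yields strict social
preference for `a` over `b`. -/
def WeakPareto {A : Type*} {n : ℕ} (F : (Fin n → Pref A) → WeakOrd A) : Prop :=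
  ∀ (P : Fin n → Pref A) (a b : A), (∀ i, (P i).1 a b) → StrictPart (F P).1 a b

/-- Inverse Weak Pareto: unanimous strict preference for `a` over `b` yields strict
social preference for `b` over `a`. -/
def InverseWeakPareto {A : Type*} {n : ℕ} (F : (Fin n → Pref A) → WeakOrd A) : Prop :=
  ∀ (P : Fin n → Pref A) (a b : A), (∀ i, (P i).1 a b) → StrictPart (F P).1 b a

/-!
By IIA the social ranking of a pair depends only on how the voters rank that pair, so moving
any other candidate to the top or the bottom of every ballot leaves it unchanged.

If `F` is not null, some profile ranks `a` strictly above `b`. Pushing a third candidate `c` to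
the bottom of every ballot keeps `a ≻ b` and makes `b` over `c` unanimous. If then `b ≽ c`, we
get `a ≻ c` at a profile where `a` over `c` is unanimous; otherwise `c ≻ b` where `b` over `c`
is unanimous. A strict verdict under unanimity spreads from one pair to all pairs: given
`x ≻ y` whenever `x` over `y` is unanimous and, by Non-Imposition, a profile with `y ≽ c`,
moving `x` to the top of every ballot gives `x ≻ c` with `x` over `c` unanimous; dually,
moving `y` to the bottom replaces the first candidate. The inverse case is the same argument
applied to `F` composed with reversal of the ballots.
-/

namespace Pref

variable {A : Type*}

lemma irrefl (r : Pref A) (a : A) : ¬ r.1 a a :=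
  letI := r.2; irrefl_of r.1 a

lemma asymm (r : Pref A) {a b : A} (h : r.1 a b) : ¬ r.1 b a :=
  letI := r.2; asymm_of r.1 h

lemma trans (r : Pref A) {a b c : A} (h₁ : r.1 a b) (h₂ : r.1 b c) : r.1 a c :=
  letI := r.2; trans_of r.1 h₁ h₂

def reverse (r : Pref A) : Pref A :=
  ⟨flip r.1,
   { irrefl := r.irrefl
     trans := fun _ _ _ h₁ h₂ => r.trans h₂ h₁
     trichotomous := fun a b h₁ h₂ => (r.2.trichotomous b a h₁ h₂).symm }⟩

/-- Move `x` to the top of `r`, keeping the order of all other candidates. -/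
def toTop (x : A) (r : Pref A) : Pref A :=
  ⟨fun a b => b ≠ x ∧ (a = x ∨ r.1 a b),
   { irrefl := fun a h => r.irrefl a (h.2.resolve_left h.1)
     trans := fun a b c hab hbc =>
       ⟨hbc.1, hab.2.imp_right fun h => r.trans h (hbc.2.resolve_left hab.1)⟩
     trichotomous := fun a b hab hba => by
       by_contra hne
       by_cases hb : b = x
       · exact hba ⟨hb ▸ hne, Or.inl hb⟩
       by_cases ha : a = x
       · exact hab ⟨hb, Or.inl ha⟩
       exact hne (r.2.trichotomous a b (fun h => hab ⟨hb, Or.inr h⟩)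
         (fun h => hba ⟨ha, Or.inr h⟩)) }⟩

def toBottom (x : A) (r : Pref A) : Pref A :=
  (r.reverse.toTop x).reverse

lemma toTop_rel {x b : A} (r : Pref A) (hb : b ≠ x) : (r.toTop x).1 x b :=
  ⟨hb, Or.inl rfl⟩

lemma toBottom_rel {x a : A} (r : Pref A) (ha : a ≠ x) : (r.toBottom x).1 a x :=
  r.reverse.toTop_rel ha

lemma toTop_rel_iff {x a b : A} (r : Pref A) (ha : a ≠ x) (hb : b ≠ x) :
    (r.toTop x).1 a b ↔ r.1 a b := by
  simp [toTop, ha, hb]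

lemma agreeOnPair_toTop {x a b : A} (r : Pref A) (ha : a ≠ x) (hb : b ≠ x) :
    AgreeOnPair (r.toTop x).1 r.1 a b :=
  ⟨r.toTop_rel_iff ha hb, r.toTop_rel_iff hb ha⟩

lemma agreeOnPair_toBottom {x a b : A} (r : Pref A) (ha : a ≠ x) (hb : b ≠ x) :
    AgreeOnPair (r.toBottom x).1 r.1 a b :=
  ⟨r.reverse.toTop_rel_iff hb ha, r.reverse.toTop_rel_iff ha hb⟩

end Pref

namespace WeakOrd

variable {A : Type*} (R : WeakOrd A) {a b c : A}

lemma strictPart_of_strictPart_of_rel (h₁ : StrictPart R.1 a b) (h₂ : R.1 b c) :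
    StrictPart R.1 a c :=
  ⟨R.2.2.1 h₁.1 h₂, fun h => h₁.2 (R.2.2.1 h₂ h)⟩

lemma strictPart_of_rel_of_strictPart (h₁ : R.1 a b) (h₂ : StrictPart R.1 b c) :
    StrictPart R.1 a c :=
  ⟨R.2.2.1 h₁ h₂.1, fun h => h₂.2 (R.2.2.1 h h₁)⟩

lemma strictPart_of_not_rel (h : ¬ R.1 a b) : StrictPart R.1 b a :=
  ⟨(R.2.2.2 a b).resolve_left h, h⟩

end WeakOrd

lemma AgreeOnPair.swap {A : Type*} {r r' : A → A → Prop} {a b : A}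
    (h : AgreeOnPair r r' a b) : AgreeOnPair r r' b a :=
  ⟨h.2, h.1⟩

lemma AgreeOnPair.strictPart_iff {A : Type*} {r r' : A → A → Prop} {a b : A}
    (h : AgreeOnPair r r' a b) : StrictPart r a b ↔ StrictPart r' a b := by
  rw [StrictPart, StrictPart, h.1, h.2]

section ParetoPair

variable {A : Type*} {n : ℕ} (F : (Fin n → Pref A) → WeakOrd A)

def ParetoPair (a b : A) : Prop :=
  ∀ P : Fin n → Pref A, (∀ i, (P i).1 a b) → StrictPart (F P).1 a b

def InverseParetoPair (a b : A) : Prop :=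
  ∀ P : Fin n → Pref A, (∀ i, (P i).1 a b) → StrictPart (F P).1 b a

def precompReverse : (Fin n → Pref A) → WeakOrd A :=
  fun P => F fun i => (P i).reverse

variable {F}

lemma IIA.precompReverse (hIIA : IIA F) : IIA (precompReverse F) :=
  fun _ _ a b h => hIIA _ _ a b fun i => (h i).symm

lemma NonImposition.precompReverse (hNI : NonImposition F) : NonImposition (precompReverse F) := by
  intro a b
  obtain ⟨P, hP⟩ := hNI a b
  exact ⟨fun i => (P i).reverse, hP⟩

lemma inverseParetoPair_iff_paretoPair_precompReverse {a b : A} :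
    InverseParetoPair F a b ↔ ParetoPair (precompReverse F) b a :=
  ⟨fun h P hP => h (fun i => (P i).reverse) hP,
   fun h P hP => h (fun i => (P i).reverse) hP⟩

lemma ne_of_unanimous (hn : 0 < n) {P : Fin n → Pref A} {a b : A} (h : ∀ i, (P i).1 a b) :
    a ≠ b := by
  rintro rfl
  exact (P ⟨0, hn⟩).irrefl a (h _)

lemma IIA.agreeOnPair_of_unanimous (hIIA : IIA F) {P P' : Fin n → Pref A} {a b : A}
    (hP : ∀ i, (P i).1 a b) (hP' : ∀ i, (P' i).1 a b) : AgreeOnPair (F P).1 (F P').1 a b :=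
  hIIA P P' a b fun i =>
    ⟨iff_of_true (hP i) (hP' i), iff_of_false ((P i).asymm (hP i)) ((P' i).asymm (hP' i))⟩

lemma IIA.paretoPair_of_strictPart (hIIA : IIA F) {P : Fin n → Pref A} {a b : A}
    (hP : ∀ i, (P i).1 a b) (h : StrictPart (F P).1 a b) : ParetoPair F a b :=
  fun _ hP' => (hIIA.agreeOnPair_of_unanimous hP hP').strictPart_iff.1 h

lemma IIA.inverseParetoPair_of_strictPart (hIIA : IIA F) {P : Fin n → Pref A} {a b : A}
    (hP : ∀ i, (P i).1 a b) (h : StrictPart (F P).1 b a) : InverseParetoPair F a b :=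
  fun _ hP' => (hIIA.agreeOnPair_of_unanimous hP hP').swap.strictPart_iff.1 h

variable (hIIA : IIA F) (hNI : NonImposition F)
include hIIA hNI

lemma ParetoPair.replace_snd {x y c : A} (hxy : x ≠ y) (hcx : c ≠ x) (h : ParetoPair F x y) :
    ParetoPair F x c := by
  obtain ⟨P, hP⟩ := hNI y c
  let Q := fun i => (P i).toTop x
  have hyc : (F Q).1 y c :=
    ((hIIA Q P y c fun i => (P i).agreeOnPair_toTop hxy.symm hcx).1).2 hP
  have hxy' : StrictPart (F Q).1 x y := h Q fun i => (P i).toTop_rel hxy.symm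
  exact hIIA.paretoPair_of_strictPart (fun i => (P i).toTop_rel hcx)
    ((F Q).strictPart_of_strictPart_of_rel hxy' hyc)

lemma ParetoPair.replace_fst {x y c : A} (hxy : x ≠ y) (hcy : c ≠ y) (h : ParetoPair F x y) :
    ParetoPair F c y := by
  obtain ⟨P, hP⟩ := hNI c x
  let Q := fun i => (P i).toBottom y
  have hcx : (F Q).1 c x :=
    ((hIIA Q P c x fun i => (P i).agreeOnPair_toBottom hcy hxy).1).2 hP
  have hxy' : StrictPart (F Q).1 x y := h Q fun i => (P i).toBottom_rel hxy
  exact hIIA.paretoPair_of_strictPart (fun i => (P i).toBottom_rel hcy)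
    ((F Q).strictPart_of_rel_of_strictPart hcx hxy')

lemma ParetoPair.of_ne (hA : 3 ≤ ENat.card A) {x y u v : A} (hxy : x ≠ y)
    (huv : u ≠ v) (h : ParetoPair F x y) : ParetoPair F u v := by
  obtain ⟨c, hcx, hcu⟩ := ENat.exists_ne_ne_of_three_le hA x u
  have hxc : ParetoPair F x c := h.replace_snd hIIA hNI hxy hcx
  have huc : ParetoPair F u c := hxc.replace_fst hIIA hNI hcx.symm hcu.symm
  exact huc.replace_snd hIIA hNI hcu.symm huv.symm

lemma ParetoPair.weakPareto (hA : 3 ≤ ENat.card A) (hn : 0 < n) {x y : A}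
    (hxy : x ≠ y) (h : ParetoPair F x y) : WeakPareto F :=
  fun P _ _ hab => h.of_ne hIIA hNI hA hxy (ne_of_unanimous hn hab) P hab

lemma InverseParetoPair.inverseWeakPareto (hA : 3 ≤ ENat.card A) (hn : 0 < n)
    {x y : A} (hxy : x ≠ y) (h : InverseParetoPair F x y) : InverseWeakPareto F := by
  intro P _ _ hab
  have h' := inverseParetoPair_iff_paretoPair_precompReverse.1 h
  exact inverseParetoPair_iff_paretoPair_precompReverse.2
    (h'.of_ne hIIA.precompReverse hNI.precompReverse hA hxy.symm
      (ne_of_unanimous hn hab).symm) P hab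

end ParetoPair

lemma NonImposition.nullRule_of_fin_zero {A : Type*} {F : (Fin 0 → Pref A) → WeakOrd A}
    (hNI : NonImposition F) : NullRule F := by
  intro P a b
  obtain ⟨P₁, h₁⟩ := hNI a b
  obtain ⟨P₂, h₂⟩ := hNI b a
  rw [Subsingleton.elim P₁ P] at h₁
  rw [Subsingleton.elim P₂ P] at h₂
  exact ⟨h₁, h₂⟩

lemma exists_strictPart_of_not_nullRule {A : Type*} {n : ℕ} {F : (Fin n → Pref A) → WeakOrd A}
    (h : ¬ NullRule F) : ∃ (P : Fin n → Pref A) (a b : A), StrictPart (F P).1 a b := by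
  simp only [NullRule, not_forall] at h
  obtain ⟨P, a, b, hab⟩ := h
  by_cases hba : (F P).1 b a
  · exact ⟨P, b, a, hba, fun h => hab ⟨h, hba⟩⟩
  · exact ⟨P, a, b, (F P).strictPart_of_not_rel hba⟩

/-- An IIA and non-imposed social welfare function is null, weakly Paretian, or
inversely weakly Paretian. -/
theorem null_or_pareto_or_inverse {A : Type*} [Fintype A] (hA : 3 ≤ Fintype.card A)
    {n : ℕ} (F : (Fin n → Pref A) → WeakOrd A)
    (hIIA : IIA F) (hNI : NonImposition F) :
    NullRule F ∨ WeakPareto F ∨ InverseWeakPareto F := by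
  obtain rfl | hn := Nat.eq_zero_or_pos n
  · exact Or.inl hNI.nullRule_of_fin_zero
  by_cases hnull : NullRule F
  · exact Or.inl hnull
  obtain ⟨P, a, b, hab⟩ := exists_strictPart_of_not_nullRule hnull
  have hA' : 3 ≤ ENat.card A := by rw [ENat.card_eq_coe_fintype_card]; exact_mod_cast hA
  obtain ⟨c, hca, hcb⟩ := ENat.exists_ne_ne_of_three_le hA' a b
  let Q := fun i => (P i).toBottom c
  have hab' : StrictPart (F Q).1 a b :=
    (hIIA Q P a b fun i => (P i).agreeOnPair_toBottom hca.symm hcb.symm).strictPart_iff.2 hab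
  right
  by_cases hbc : (F Q).1 b c
  · left
    exact (hIIA.paretoPair_of_strictPart (fun i => (P i).toBottom_rel hca.symm)
      ((F Q).strictPart_of_strictPart_of_rel hab' hbc)).weakPareto hIIA hNI hA' hn hca.symm
  · right
    exact (hIIA.inverseParetoPair_of_strictPart (fun i => (P i).toBottom_rel hcb.symm)
      ((F Q).strictPart_of_not_rel hbc)).inverseWeakPareto hIIA hNI hA' hn hcb.symm
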